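/- arXiv:2301.13565 — 2 statements merged into one kernel-verified Lean document; each statement's English description precedes it below -/
import Mathlib

section
/- Strong duality for the discrete Wasserstein DRO linear program: the optimal value of max over P ∈ ℝ_{+}^{n×m} of Σ_{i,j} h_j P_{ij} subject to Σ_{i,j} d_{ij}^p P_{ij} ≤ ε^p and Σ_j P_{ij} = μ̄_i for all i, equals the optimal value of min over λ₀ ≥ 0 of ε^p λ₀ + Σ_{i=1}^n μ̄_i · max_{j ∈ [m]} (h_j − λ₀ d_{ij}^p), provided the primal is feasible. -/
/-!
Map each transport plan `P` to the point `(∑ c P, ∑ r P)` (cost, reward) of the plane, and let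
`B` be the cost budget and `V` the primal value. The image `K` of the compact convex set of plans
is compact and convex, so for each `δ > 0` it can be strictly separated from the closed quadrant
`{x ≤ B, y ≥ V + δ}`. Since the quadrant recedes in the directions `-x` and `+y` and `K` contains
a feasible point, the separating line has a slope `λ ≥ 0` and passes below `(B, V + δ)`; that is,
reward − λ·cost ≤ V + δ − λB for every plan. The maximum of reward − λ·cost over plans decouples
across rows: each row puts its whole mass on a column maximizing `r i j - λ c i j`, which gives
the dual objective.
-/

open Finset

theorem nonneg_of_forall_lt_add_mul {a c d : ℝ} (h : ∀ t : ℝ, 0 ≤ t → c < d + t * a) :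
    0 ≤ a := by
  by_contra! ha
  have hcd : 0 ≤ d - c := by linarith [h 0 le_rfl]
  have key : (d - c) / -a * a = c - d := by field_simp [ha.ne]; ring
  linarith [h ((d - c) / -a) (div_nonneg hcd (by linarith))]

section Plane

variable {K : Set (ℝ × ℝ)} {B : ℝ}

theorem exists_lagrange_multiplier (hK : IsCompact K) (hKc : Convex ℝ K)
    (hfeas : ∃ q ∈ K, q.1 ≤ B) {W : ℝ} (hW : ∀ q ∈ K, q.1 ≤ B → q.2 < W) :
    ∃ lam, 0 ≤ lam ∧ ∀ q ∈ K, q.2 - lam * q.1 ≤ W - lam * B := by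
  let O : Set (ℝ × ℝ) := {q | q.1 ≤ B ∧ W ≤ q.2}
  have hOc : IsClosed O :=
    (isClosed_le continuous_fst continuous_const).inter
      (isClosed_le continuous_const continuous_snd)
  have hOconv : Convex ℝ O :=
    (convex_halfSpace_le (f := Prod.fst) ⟨fun _ _ => rfl, fun _ _ => rfl⟩ B).inter
      (convex_halfSpace_ge (f := Prod.snd) ⟨fun _ _ => rfl, fun _ _ => rfl⟩ W)
  have hdisj : Disjoint K O :=
    Set.disjoint_left.2 fun q hq hqO => (hW q hq hqO.1).not_ge hqO.2
  obtain ⟨f, u, v, hfK, huv, hfO⟩ :=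
    geometric_hahn_banach_compact_closed hKc hK hOconv hOc hdisj
  have hf : ∀ q : ℝ × ℝ, f q = q.1 * f (1, 0) + q.2 * f (0, 1) := fun q => by
    conv_lhs => rw [show q = q.1 • ((1 : ℝ), (0 : ℝ)) + q.2 • ((0 : ℝ), (1 : ℝ)) by ext <;> simp]
    simp only [map_add, map_smul, smul_eq_mul]
  have hshift : ∀ s t : ℝ, 0 ≤ s → 0 ≤ t → v < (B - s) * f (1, 0) + (W + t) * f (0, 1) :=
    fun s t hs ht => hf (B - s, W + t) ▸ hfO _ ⟨by simp [hs], by simp [ht]⟩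
  have ha : 0 ≤ -f (1, 0) :=
    nonneg_of_forall_lt_add_mul (c := v) (d := B * f (1, 0) + W * f (0, 1)) fun s hs => by
      linarith [hshift s 0 hs le_rfl]
  have hb : 0 ≤ f (0, 1) :=
    nonneg_of_forall_lt_add_mul (c := v) (d := B * f (1, 0) + W * f (0, 1)) fun t ht => by
      linarith [hshift 0 t le_rfl ht]
  -- A vertical separating line would leave the feasible point of `K` on the side of `O`.
  have hb' : 0 < f (0, 1) := by
    refine hb.lt_of_ne fun hb0 => ?_
    obtain ⟨q, hq, hqB⟩ := hfeas
    have h1 := hfK q hq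
    have h2 := hshift 0 0 le_rfl le_rfl
    rw [hf, ← hb0] at h1
    rw [← hb0] at h2
    linarith [mul_nonneg ha (sub_nonneg.2 hqB)]
  set lam := -f (1, 0) / f (0, 1)
  have hlam : f (1, 0) = -(lam * f (0, 1)) := by rw [div_mul_cancel₀ _ hb'.ne', neg_neg]
  refine ⟨lam, div_nonneg ha hb, fun q hq => le_of_mul_le_mul_left ?_ hb'⟩
  have hq := hf q ▸ hfK q hq
  have hBW := hshift 0 0 le_rfl le_rfl
  rw [hlam] at hq hBW
  linarith

theorem sSup_le_constraint_eq_sInf_lagrangian (hK : IsCompact K) (hKc : Convex ℝ K)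
    (hfeas : ∃ q ∈ K, q.1 ≤ B) :
    sSup {y | ∃ q ∈ K, q.1 ≤ B ∧ y = q.2}
      = sInf {v | ∃ lam, 0 ≤ lam ∧ v = B * lam + sSup ((fun q => q.2 - lam * q.1) '' K)} := by
  obtain ⟨q₀, hq₀, hq₀B⟩ := hfeas
  set S := {y | ∃ q ∈ K, q.1 ≤ B ∧ y = q.2}
  set D := {v | ∃ lam, 0 ≤ lam ∧ v = B * lam + sSup ((fun q => q.2 - lam * q.1) '' K)}
  have weak : ∀ q ∈ K, q.1 ≤ B → ∀ lam : ℝ, 0 ≤ lam →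
      q.2 ≤ B * lam + sSup ((fun q => q.2 - lam * q.1) '' K) := fun q hq hqB lam hlam => by
    have hsup : q.2 - lam * q.1 ≤ sSup ((fun q => q.2 - lam * q.1) '' K) :=
      le_csSup (hK.image (by fun_prop)).bddAbove ⟨q, hq, rfl⟩
    linarith [mul_le_mul_of_nonneg_left hqB hlam]
  have hSbdd : BddAbove S := ⟨_, by rintro _ ⟨q, hq, hqB, rfl⟩; exact weak q hq hqB 0 le_rfl⟩
  have hDbdd : BddBelow D := ⟨q₀.2, by rintro _ ⟨lam, hlam, rfl⟩; exact weak q₀ hq₀ hq₀B lam hlam⟩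
  apply le_antisymm
  · refine csSup_le ⟨_, q₀, hq₀, hq₀B, rfl⟩ fun _ ⟨q, hq, hqB, hy⟩ => ?_
    exact le_csInf ⟨_, 0, le_rfl, rfl⟩ fun _ ⟨lam, hlam, hv⟩ => hy ▸ hv ▸ weak q hq hqB lam hlam
  · refine le_of_forall_pos_le_add fun δ hδ => ?_
    obtain ⟨lam, hlam, hmult⟩ := exists_lagrange_multiplier hK hKc ⟨q₀, hq₀, hq₀B⟩
      (W := sSup S + δ) fun q hq hqB =>
        (le_csSup hSbdd ⟨q, hq, hqB, rfl⟩).trans_lt (lt_add_of_pos_right _ hδ)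
    have hdual : sSup ((fun q => q.2 - lam * q.1) '' K) ≤ sSup S + δ - lam * B :=
      csSup_le ⟨_, q₀, hq₀, rfl⟩ fun _ ⟨q, hq, hv⟩ => hv ▸ hmult q hq
    exact (csInf_le hDbdd ⟨lam, hlam, rfl⟩).trans (by linarith)

end Plane

section Transport

variable {ι κ : Type*} [Fintype κ]

def transportPlans (μ : ι → ℝ) : Set (ι → κ → ℝ) :=
  {P | (∀ i j, 0 ≤ P i j) ∧ ∀ i, ∑ j, P i j = μ i}

theorem isCompact_transportPlans (μ : ι → ℝ) : IsCompact (transportPlans (κ := κ) μ) := by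
  have hclosed : IsClosed (transportPlans (κ := κ) μ) := by
    simp only [transportPlans, Set.ofPred_and, Set.ofPred_forall]
    exact (isClosed_iInter fun i => isClosed_iInter fun j =>
      isClosed_le continuous_const (by fun_prop)).inter
        (isClosed_iInter fun i => isClosed_eq (by fun_prop) continuous_const)
  refine (isCompact_Icc (a := 0) (b := fun i _ => μ i)).of_isClosed_subset hclosed ?_
  rintro P ⟨hP, hrow⟩
  refine ⟨fun i j => hP i j, fun i j => ?_⟩
  show P i j ≤ μ i
  rw [← hrow i]
  exact single_le_sum (fun k _ => hP i k) (mem_univ j)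

theorem convex_transportPlans (μ : ι → ℝ) : Convex ℝ (transportPlans (κ := κ) μ) := by
  rintro P ⟨hP, hProw⟩ Q ⟨hQ, hQrow⟩ a b ha hb hab
  refine ⟨fun i j => add_nonneg (mul_nonneg ha (hP i j)) (mul_nonneg hb (hQ i j)), fun i => ?_⟩
  simp only [Pi.add_apply, Pi.smul_apply, smul_eq_mul, sum_add_distrib, ← mul_sum, hProw,
    hQrow, ← add_mul, hab, one_mul]

variable [Nonempty κ]

theorem isGreatest_pairing_transportPlans [Fintype ι] {μ : ι → ℝ} (hμ : ∀ i, 0 ≤ μ i)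
    (f : ι → κ → ℝ) :
    IsGreatest ((fun P => ∑ i, ∑ j, f i j * P i j) '' transportPlans μ)
      (∑ i, μ i * univ.sup' univ_nonempty (f i)) := by
  classical
  refine ⟨?_, ?_⟩
  · choose j hj using fun i => exists_mem_eq_sup' univ_nonempty (f i)
    refine ⟨fun i k => if k = j i then μ i else 0,
      ⟨fun i k => ite_nonneg (hμ i) le_rfl, fun i => by simp⟩, ?_⟩
    simp [mul_comm, hj]
  · rintro _ ⟨P, ⟨hP, hProw⟩, rfl⟩
    refine sum_le_sum fun i _ => ?_
    calc ∑ j, f i j * P i j ≤ ∑ j, univ.sup' univ_nonempty (f i) * P i j :=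
          sum_le_sum fun j _ => mul_le_mul_of_nonneg_right (le_sup' _ (mem_univ j)) (hP i j)
      _ = μ i * univ.sup' univ_nonempty (f i) := by rw [← mul_sum, hProw, mul_comm]

theorem sSup_transportLP_eq_sInf_dual [Fintype ι] (c r : ι → κ → ℝ) (B : ℝ) (μ : ι → ℝ)
    (hfeas : ∃ P : ι → κ → ℝ, (∀ i j, 0 ≤ P i j) ∧ (∀ i, ∑ j, P i j = μ i)
      ∧ ∑ i, ∑ j, c i j * P i j ≤ B) :
    sSup {v : ℝ | ∃ P : ι → κ → ℝ, (∀ i j, 0 ≤ P i j) ∧ (∀ i, ∑ j, P i j = μ i)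
        ∧ (∑ i, ∑ j, c i j * P i j ≤ B) ∧ v = ∑ i, ∑ j, r i j * P i j}
      = sInf {v : ℝ | ∃ lam : ℝ, 0 ≤ lam ∧
          v = B * lam + ∑ i, μ i * univ.sup' univ_nonempty fun j => r i j - lam * c i j} := by
  obtain ⟨P₀, hP₀, hP₀row, hP₀B⟩ := hfeas
  have hμ : ∀ i, 0 ≤ μ i := fun i => hP₀row i ▸ sum_nonneg fun j _ => hP₀ i j
  let K := (fun P => (∑ i, ∑ j, c i j * P i j, ∑ i, ∑ j, r i j * P i j)) '' transportPlans μ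
  have hK : IsCompact K := (isCompact_transportPlans μ).image (by fun_prop)
  have hKc : Convex ℝ K := (convex_transportPlans μ).is_linear_image
    ⟨fun P Q => by simp [mul_add, sum_add_distrib],
     fun a P => by simp [mul_sum, mul_left_comm]⟩
  have hlagrangian : ∀ lam, sSup ((fun q => q.2 - lam * q.1) '' K)
      = ∑ i, μ i * univ.sup' univ_nonempty fun j => r i j - lam * c i j := fun lam => by
    rw [Set.image_image, ← (isGreatest_pairing_transportPlans hμ _).csSup_eq]
    congr! 3 with P
    simp [sub_mul, sum_sub_distrib, mul_sum, mul_assoc]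
  convert sSup_le_constraint_eq_sInf_lagrangian hK hKc ⟨_, ⟨P₀, ⟨hP₀, hP₀row⟩, rfl⟩, hP₀B⟩ using 3
  · ext v
    constructor
    · rintro ⟨P, hP, hProw, hPB, rfl⟩
      exact ⟨_, ⟨P, ⟨hP, hProw⟩, rfl⟩, hPB, rfl⟩
    · rintro ⟨_, ⟨P, ⟨hP, hProw⟩, rfl⟩, hPB, rfl⟩
      exact ⟨P, hP, hProw, hPB, rfl⟩
  · simp only [hlagrangian]

end Transport

theorem discrete_wasserstein_dro_strong_duality_general
    (n m : ℕ) [NeZero m]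
    (h : Fin m → ℝ) (d : Fin n → Fin m → ℝ)
    (ε : ℝ) (p : ℝ)
    (μbar : Fin n → ℝ)
    (hfeas : ∃ P : Fin n → Fin m → ℝ,
      (∀ i j, 0 ≤ P i j) ∧ (∀ i, ∑ j, P i j = μbar i)
        ∧ ∑ i, ∑ j, d i j ^ p * P i j ≤ ε ^ p) :
    sSup {v : ℝ | ∃ P : Fin n → Fin m → ℝ,
        (∀ i j, 0 ≤ P i j) ∧ (∀ i, ∑ j, P i j = μbar i)
          ∧ (∑ i, ∑ j, d i j ^ p * P i j ≤ ε ^ p)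
          ∧ v = ∑ i, ∑ j, h j * P i j}
      = sInf {v : ℝ | ∃ lam : ℝ, 0 ≤ lam ∧
          v = ε ^ p * lam + ∑ i, μbar i *
            (Finset.univ.sup' Finset.univ_nonempty
              fun j : Fin m => h j - lam * d i j ^ p)} :=
  sSup_transportLP_eq_sInf_dual (fun i j => d i j ^ p) (fun _ j => h j) (ε ^ p) μbar hfeas

/-- strong duality for the discrete Wasserstein DRO linear
program.  The optimal value of the primal transport LP equals the optimal value
of the one-dimensional dual over `λ₀ ≥ 0`. -/
theorem discrete_wasserstein_dro_strong_duality
    (n m : ℕ) (hn : 0 < n) [NeZero m]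
    (h : Fin m → ℝ) (d : Fin n → Fin m → ℝ) (hd : ∀ i j, 0 ≤ d i j)
    (ε : ℝ) (hε : 0 < ε) (p : ℝ) (hp : 1 ≤ p)
    (μbar : Fin n → ℝ) (hμ0 : ∀ i, 0 ≤ μbar i) (hμ1 : ∑ i, μbar i = 1)
    (hfeas : ∃ P : Fin n → Fin m → ℝ,
      (∀ i j, 0 ≤ P i j) ∧ (∀ i, ∑ j, P i j = μbar i)
        ∧ ∑ i, ∑ j, d i j ^ p * P i j ≤ ε ^ p) :
    sSup {v : ℝ | ∃ P : Fin n → Fin m → ℝ,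
        (∀ i j, 0 ≤ P i j) ∧ (∀ i, ∑ j, P i j = μbar i)
          ∧ (∑ i, ∑ j, d i j ^ p * P i j ≤ ε ^ p)
          ∧ v = ∑ i, ∑ j, h j * P i j}
      = sInf {v : ℝ | ∃ lam : ℝ, 0 ≤ lam ∧
          v = ε ^ p * lam + ∑ i, μbar i *
            (Finset.univ.sup' Finset.univ_nonempty
              fun j : Fin m => h j - lam * d i j ^ p)} :=
  discrete_wasserstein_dro_strong_duality_general n m h d ε p μbar hfeas
end

section
/- Weak duality for Wasserstein DRO: for every λ ≥ 0 and every P with W_p(P, P̄) ≤ ε, one has E_P h(ξ) ≤ λ ε^p + E_{P̄}[ sup_{ξ ∈ Ξ} (h(ξ) − λ d^p(ξ, ξ̄)) ], where the expectation on the right is over ξ̄ ∼ P̄. Consequently, sup_{P: W_p(P,P̄) ≤ ε} E_P h ≤ inf_{λ ≥ 0} { λ ε^p + E_{P̄} sup_ξ (h(ξ) − λ d^p(ξ, ·)) }. -/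
/-!
Take a coupling `π` of `P` and `P̄` with transport cost at most `ε ^ p`. By definition of
`φ lam` as a supremum, `h ξ - φ lam ξ̄ ≤ lam * d(ξ, ξ̄) ^ p` for all `ξ, ξ̄`; integrating
against `π` and using its marginals gives `E_P h - E_P̄ φ lam ≤ lam * ε ^ p`. Every primal value
is thus below every dual value, which is the `sSup ≤ sInf` inequality.
-/

open MeasureTheory

/-- `π` is a coupling of `P` and `Q`. -/
def IsCoupling {Ξ : Type*} [MeasurableSpace Ξ]
    (π : Measure (Ξ × Ξ)) (P Q : Measure Ξ) : Prop :=
  π.map Prod.fst = P ∧ π.map Prod.snd = Q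

/-- `P` lies in the order-`p` Wasserstein ball of radius `ε` around `Q`. -/
def MemWassersteinBall {Ξ : Type*} [PseudoMetricSpace Ξ] [MeasurableSpace Ξ]
    (P Q : Measure Ξ) (p ε : ℝ) : Prop :=
  ∃ π : Measure (Ξ × Ξ), IsProbabilityMeasure π ∧ IsCoupling π P Q ∧
    ∫⁻ z, ENNReal.ofReal (dist z.1 z.2 ^ p) ∂π ≤ ENNReal.ofReal (ε ^ p)

/-- Only the positive part of `f` is compared with `g`, so `g` need not be measurable
(the cost `dist ^ p` need not be measurable for the product σ-algebra on `Ξ × Ξ`). -/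
theorem integral_le_mul_of_ae_le_mul_of_lintegral_le {α : Type*} [MeasurableSpace α]
    {μ : Measure α} {f g : α → ℝ} {c b : ℝ}
    (hf : Integrable f μ) (hc : 0 ≤ c) (hb : 0 ≤ b) (hfg : ∀ᵐ x ∂μ, f x ≤ c * g x)
    (hg : ∫⁻ x, ENNReal.ofReal (g x) ∂μ ≤ ENNReal.ofReal b) :
    ∫ x, f x ∂μ ≤ c * b := by
  have hpos : ∫⁻ x, ENNReal.ofReal (f x) ∂μ ≤ ENNReal.ofReal (c * b) :=
    calc ∫⁻ x, ENNReal.ofReal (f x) ∂μ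
        ≤ ∫⁻ x, ENNReal.ofReal c * ENNReal.ofReal (g x) ∂μ := by
          refine lintegral_mono_ae (hfg.mono fun x hx => ?_)
          rw [← ENNReal.ofReal_mul hc]
          exact ENNReal.ofReal_le_ofReal hx
      _ = ENNReal.ofReal c * ∫⁻ x, ENNReal.ofReal (g x) ∂μ :=
          lintegral_const_mul' _ _ ENNReal.ofReal_ne_top
      _ ≤ ENNReal.ofReal (c * b) := by
          rw [ENNReal.ofReal_mul hc]
          gcongr
  rw [integral_eq_lintegral_pos_part_sub_lintegral_neg_part hf]
  exact (sub_le_self _ ENNReal.toReal_nonneg).trans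
    (ENNReal.toReal_le_of_le_ofReal (mul_nonneg hc hb) hpos)

namespace IsCoupling

variable {Ξ : Type*} [MeasurableSpace Ξ] {π : Measure (Ξ × Ξ)} {P Q : Measure Ξ} {f : Ξ → ℝ}

theorem integrable_comp_fst (hπ : IsCoupling π P Q) (hf : Integrable f P) :
    Integrable (fun z => f z.1) π := by
  rw [← hπ.1] at hf
  exact (integrable_map_measure hf.aestronglyMeasurable measurable_fst.aemeasurable).mp hf

theorem integrable_comp_snd (hπ : IsCoupling π P Q) (hf : Integrable f Q) :
    Integrable (fun z => f z.2) π := by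
  rw [← hπ.2] at hf
  exact (integrable_map_measure hf.aestronglyMeasurable measurable_snd.aemeasurable).mp hf

theorem integral_comp_fst (hπ : IsCoupling π P Q) (hf : AEStronglyMeasurable f P) :
    ∫ z, f z.1 ∂π = ∫ x, f x ∂P := by
  rw [← hπ.1] at hf ⊢
  exact (integral_map measurable_fst.aemeasurable hf).symm

theorem integral_comp_snd (hπ : IsCoupling π P Q) (hf : AEStronglyMeasurable f Q) :
    ∫ z, f z.2 ∂π = ∫ x, f x ∂Q := by
  rw [← hπ.2] at hf ⊢
  exact (integral_map measurable_snd.aemeasurable hf).symm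

end IsCoupling

theorem MemWassersteinBall.integral_le_mul_add_integral {Ξ : Type*} [PseudoMetricSpace Ξ]
    [MeasurableSpace Ξ] {P Q : Measure Ξ} {p ε lam : ℝ} {h ψ : Ξ → ℝ}
    (hPQ : MemWassersteinBall P Q p ε) (hε : 0 ≤ ε) (hlam : 0 ≤ lam)
    (hh : Integrable h P) (hψ : Integrable ψ Q)
    (hle : ∀ ξ ξbar, h ξ ≤ lam * dist ξ ξbar ^ p + ψ ξbar) :
    ∫ x, h x ∂P ≤ lam * ε ^ p + ∫ x, ψ x ∂Q := by
  obtain ⟨π, -, hπ, hcost⟩ := hPQ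
  have hgap : ∫ z, (h z.1 - ψ z.2) ∂π ≤ lam * ε ^ p :=
    integral_le_mul_of_ae_le_mul_of_lintegral_le
      ((hπ.integrable_comp_fst hh).sub (hπ.integrable_comp_snd hψ)) hlam
      (Real.rpow_nonneg hε p)
      (Filter.Eventually.of_forall fun z => sub_le_iff_le_add.mpr (hle z.1 z.2)) hcost
  rw [integral_sub (hπ.integrable_comp_fst hh) (hπ.integrable_comp_snd hψ),
    hπ.integral_comp_fst hh.aestronglyMeasurable,
    hπ.integral_comp_snd hψ.aestronglyMeasurable] at hgap
  linarith

theorem wasserstein_dro_weak_duality_general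
    {Ξ : Type*} [MetricSpace Ξ] [MeasurableSpace Ξ]
    (Pbar : Measure Ξ)
    (p ε : ℝ) (hε : 0 ≤ ε)
    (h : Ξ → ℝ)
    (φ : ℝ → Ξ → ℝ)
    (hφ : ∀ lam : ℝ, 0 ≤ lam → ∀ ξbar : Ξ,
      IsLUB (Set.range fun ξ => h ξ - lam * dist ξ ξbar ^ p) (φ lam ξbar))
    (hφint : ∀ lam : ℝ, 0 ≤ lam → Integrable (φ lam) Pbar) :
    (∀ lam : ℝ, 0 ≤ lam → ∀ P : Measure Ξ, IsProbabilityMeasure P →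
      MemWassersteinBall P Pbar p ε → Integrable h P →
        ∫ x, h x ∂P ≤ lam * ε ^ p + ∫ ξbar, φ lam ξbar ∂Pbar)
    ∧ ({r : ℝ | ∃ P : Measure Ξ, IsProbabilityMeasure P ∧
          MemWassersteinBall P Pbar p ε ∧ Integrable h P ∧
          r = ∫ x, h x ∂P}.Nonempty →
        sSup {r : ℝ | ∃ P : Measure Ξ, IsProbabilityMeasure P ∧
            MemWassersteinBall P Pbar p ε ∧ Integrable h P ∧
            r = ∫ x, h x ∂P}
          ≤ sInf {r : ℝ | ∃ lam : ℝ, 0 ≤ lam ∧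
              r = lam * ε ^ p + ∫ ξbar, φ lam ξbar ∂Pbar}) := by
  have weak : ∀ lam : ℝ, 0 ≤ lam → ∀ P : Measure Ξ, IsProbabilityMeasure P →
      MemWassersteinBall P Pbar p ε → Integrable h P →
        ∫ x, h x ∂P ≤ lam * ε ^ p + ∫ ξbar, φ lam ξbar ∂Pbar := by
    intro lam hlam P _ hball hh
    refine hball.integral_le_mul_add_integral hε hlam hh (hφint lam hlam) fun ξ ξbar => ?_
    have := (hφ lam hlam ξbar).1 ⟨ξ, rfl⟩
    linarith
  refine ⟨weak, fun hprimal => csSup_le hprimal ?_⟩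
  rintro _ ⟨P, hP, hball, hh, rfl⟩
  refine le_csInf ⟨_, 0, le_rfl, rfl⟩ ?_
  rintro _ ⟨lam, hlam, rfl⟩
  exact weak lam hlam P hP hball hh

/-- weak duality for Wasserstein DRO.  Here `φ lam ξ̄` is the
supremum `sup_ξ (h ξ − lam·d(ξ,ξ̄)^p)` (expressed by an `IsLUB` hypothesis).
For every `lam ≥ 0` and every `P` in the Wasserstein ball,
`E_P h ≤ lam ε^p + E_{P̄} φ lam`; consequently the worst-case value is bounded
by the dual infimum. -/
theorem wasserstein_dro_weak_duality
    {Ξ : Type*} [MetricSpace Ξ] [TopologicalSpace.SeparableSpace Ξ]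
    [CompleteSpace Ξ] [MeasurableSpace Ξ] [BorelSpace Ξ]
    (Pbar : Measure Ξ) [IsProbabilityMeasure Pbar]
    (p ε : ℝ) (hp : 1 ≤ p) (hε : 0 ≤ ε)
    (h : Ξ → ℝ) (hmeas : Measurable h)
    (φ : ℝ → Ξ → ℝ)
    (hφ : ∀ lam : ℝ, 0 ≤ lam → ∀ ξbar : Ξ,
      IsLUB (Set.range fun ξ => h ξ - lam * dist ξ ξbar ^ p) (φ lam ξbar))
    (hφint : ∀ lam : ℝ, 0 ≤ lam → Integrable (φ lam) Pbar) :
    (∀ lam : ℝ, 0 ≤ lam → ∀ P : Measure Ξ, IsProbabilityMeasure P →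
      MemWassersteinBall P Pbar p ε → Integrable h P →
        ∫ x, h x ∂P ≤ lam * ε ^ p + ∫ ξbar, φ lam ξbar ∂Pbar)
    ∧ ({r : ℝ | ∃ P : Measure Ξ, IsProbabilityMeasure P ∧
          MemWassersteinBall P Pbar p ε ∧ Integrable h P ∧
          r = ∫ x, h x ∂P}.Nonempty →
        sSup {r : ℝ | ∃ P : Measure Ξ, IsProbabilityMeasure P ∧
            MemWassersteinBall P Pbar p ε ∧ Integrable h P ∧
            r = ∫ x, h x ∂P}
          ≤ sInf {r : ℝ | ∃ lam : ℝ, 0 ≤ lam ∧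
              r = lam * ε ^ p + ∫ ξbar, φ lam ξbar ∂Pbar}) :=
  wasserstein_dro_weak_duality_general Pbar p ε hε h φ hφ hφint
end
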